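/- Let (g, ω) be a symplectic Novikov Lie algebra. Then the commutator ideal D(g) = [g,g] is isotropic with respect to ω, i.e., ω([x,y],[z,t]) = 0 for all x, y, z, t in g. -/

import Mathlib

/-! In an SNLA the product is left-symmetric with commutator the Lie bracket, and right-commutative.
For such a product the identity `z·[x,y] = y·[x,z] - x·[y,z]` holds, and pairing it with `t` through
`ω(z·u, t) = -ω(u, [z,t])` turns it into
`ω([x,y],[z,t]) = ω([x,z],[y,t]) - ω([y,z],[x,t])`.
Combining this relation with itself after swapping `z` and `t`, skew-symmetry of `ω` forces
`ω([x,y],[z,t]) = 0`. -/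

section NovikovIdentity

variable {R M : Type*} [CommRing R] [AddCommGroup M] [Module R M]

theorem novikov_mul_commutator (mul : M →ₗ[R] M →ₗ[R] M)
    (hleft : ∀ a b c, mul (mul a b - mul b a) c = mul a (mul b c) - mul b (mul a c))
    (hright : ∀ a b c, mul (mul a b) c = mul (mul a c) b) (x y z : M) :
    mul z (mul x y - mul y x) = mul y (mul x z - mul z x) - mul x (mul y z - mul z y) := by
  have hexpand :
      ∀ a b c, mul a (mul b c) = mul (mul a b) c - mul (mul b a) c + mul b (mul a c) := by
    intro a b c
    rw [← LinearMap.sub_apply, ← map_sub, hleft]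
    abel
  simp only [map_sub, hexpand z x y, hexpand z y x, hexpand y x z, hright z x y, hright x z y,
    hright y z x]
  abel

end NovikovIdentity

section SymplecticLieAlgebra

variable {R g : Type*} [CommRing R] [LieRing g] [LieAlgebra R g] {ω : g →ₗ[R] g →ₗ[R] R}

theorem eq_of_forall_form_eq (hnondeg : ∀ x : g, (∀ y : g, ω x y = 0) → x = 0) {a b : g}
    (h : ∀ w, ω a w = ω b w) : a = b :=
  sub_eq_zero.mp <| hnondeg _ fun w => by rw [map_sub, LinearMap.sub_apply, h, sub_self]

variable {mul : g →ₗ[R] g →ₗ[R] g}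

theorem lie_eq_mul_sub_mul (hskew : ∀ x y : g, ω x y = - ω y x)
    (hnondeg : ∀ x : g, (∀ y : g, ω x y = 0) → x = 0)
    (hcocycle : ∀ x y z : g, ω ⁅x, y⁆ z + ω ⁅y, z⁆ x + ω ⁅z, x⁆ y = 0)
    (hdef : ∀ x y z : g, ω (mul x y) z = - ω y ⁅x, z⁆) (a b : g) :
    ⁅a, b⁆ = mul a b - mul b a := by
  refine eq_of_forall_form_eq hnondeg fun w => ?_
  have hc := hcocycle a b w
  rw [hskew ⁅b, w⁆, hskew ⁅w, a⁆, ← lie_skew w a, map_neg] at hc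
  rw [map_sub, LinearMap.sub_apply, hdef, hdef]
  linear_combination hc

theorem mul_lie_eq_mul_mul_sub_mul_mul (hnondeg : ∀ x : g, (∀ y : g, ω x y = 0) → x = 0)
    (hdef : ∀ x y z : g, ω (mul x y) z = - ω y ⁅x, z⁆) (a b c : g) :
    mul ⁅a, b⁆ c = mul a (mul b c) - mul b (mul a c) := by
  refine eq_of_forall_form_eq hnondeg fun w => ?_
  rw [map_sub, LinearMap.sub_apply, hdef, hdef, hdef, hdef, hdef, lie_lie, map_sub]
  ring

theorem form_lie_lie_eq_sub (hskew : ∀ x y : g, ω x y = - ω y x)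
    (hnondeg : ∀ x : g, (∀ y : g, ω x y = 0) → x = 0)
    (hcocycle : ∀ x y z : g, ω ⁅x, y⁆ z + ω ⁅y, z⁆ x + ω ⁅z, x⁆ y = 0)
    (hdef : ∀ x y z : g, ω (mul x y) z = - ω y ⁅x, z⁆)
    (hNov : ∀ x y z : g, mul (mul x y) z = mul (mul x z) y) (x y z t : g) :
    ω ⁅x, y⁆ ⁅z, t⁆ = ω ⁅x, z⁆ ⁅y, t⁆ - ω ⁅y, z⁆ ⁅x, t⁆ := by
  have hlie := lie_eq_mul_sub_mul hskew hnondeg hcocycle hdef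
  have hleft : ∀ a b c, mul (mul a b - mul b a) c = mul a (mul b c) - mul b (mul a c) := by
    intro a b c
    rw [← hlie, mul_lie_eq_mul_mul_sub_mul_mul hnondeg hdef]
  have hkey := congrArg (fun u => ω u t) (novikov_mul_commutator mul hleft hNov x y z)
  simp only [← hlie, map_sub, LinearMap.sub_apply, hdef] at hkey
  linear_combination -hkey

theorem form_lie_lie_eq_zero_of_relation [Invertible (2 : R)]
    (hskew : ∀ x y : g, ω x y = - ω y x)
    (hrel : ∀ x y z t : g, ω ⁅x, y⁆ ⁅z, t⁆ = ω ⁅x, z⁆ ⁅y, t⁆ - ω ⁅y, z⁆ ⁅x, t⁆) (x y z t : g) :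
    ω ⁅x, y⁆ ⁅z, t⁆ = 0 := by
  have hzt := hrel x y z t
  have htz := hrel x y t z
  rw [← lie_skew t z, map_neg, hskew ⁅y, t⁆] at htz
  rw [hskew ⁅y, z⁆] at hzt
  have htwice : 2 * ω ⁅x, y⁆ ⁅z, t⁆ = 0 := by linear_combination hzt - htz
  exact (isUnit_of_invertible 2).mul_right_eq_zero.mp htwice

end SymplecticLieAlgebra

theorem snla_stmt_8 (g : Type*) [LieRing g] [LieAlgebra ℝ g]
    (ω : g →ₗ[ℝ] g →ₗ[ℝ] ℝ)
    (hskew : ∀ x y : g, ω x y = - ω y x)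
    (hnondeg : ∀ x : g, (∀ y : g, ω x y = 0) → x = 0)
    (hcocycle : ∀ x y z : g, ω ⁅x, y⁆ z + ω ⁅y, z⁆ x + ω ⁅z, x⁆ y = 0)
    (mul : g →ₗ[ℝ] g →ₗ[ℝ] g)
    (hdef : ∀ x y z : g, ω (mul x y) z = - ω y ⁅x, z⁆)
    (hNov : ∀ x y z : g, mul (mul x y) z = mul (mul x z) y) :
    ∀ x y z t : g, ω ⁅x, y⁆ ⁅z, t⁆ = 0 :=
  form_lie_lie_eq_zero_of_relation hskew (form_lie_lie_eq_sub hskew hnondeg hcocycle hdef hNov)
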